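/- arXiv:q-bio/0510052 — 5 statements merged into one kernel-verified Lean document; each statement's English description precedes it below -/
import Mathlib

section
/- The number of distinct pairwise alignments of a sequence of length n with a sequence of length m (where two alignments are identified when they have the same set of homologous/matched position pairs) equals the binomial coefficient C(n+m, m). -/
/-!
A monotone matching `h` is the graph of the unique order isomorphism between its projections
`A = h.image Prod.fst` and `B = h.image Prod.snd`: the partner of `a ∈ A` is the element of `B`
with the same rank. Hence `h ↦ (A, B)` is a bijection onto the pairs with `#A = #B`, and counting
those by their common size `k` gives `∑ k, C(n, k) C(m, k) = C(n + m, m)` by Vandermonde.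
-/

open Finset

theorem Nat.sum_range_choose_mul_choose (n m : ℕ) :
    ∑ k ∈ range (m + 1), n.choose k * m.choose k = (n + m).choose m := by
  rw [Nat.add_choose_eq, Nat.sum_antidiagonal_eq_sum_range_succ_mk]
  refine sum_congr rfl fun k hk => ?_
  rw [Nat.choose_symm (mem_range_succ_iff.mp hk)]

theorem card_filter_card_fst_eq_card_snd (α β : Type*) [Fintype α] [Fintype β] :
    #(univ.filter fun AB : Finset α × Finset β => #AB.1 = #AB.2)
      = (Fintype.card α + Fintype.card β).choose (Fintype.card β) := by
  classical
  rw [← Nat.sum_range_choose_mul_choose,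
    card_eq_sum_card_fiberwise (f := fun AB => #AB.2) (t := range (Fintype.card β + 1))
      fun AB _ => mem_range_succ_iff.mpr (card_le_univ _)]
  refine sum_congr rfl fun k _ => ?_
  have hfiber : ((univ.filter fun AB : Finset α × Finset β => #AB.1 = #AB.2).filter
      fun AB => #AB.2 = k) = powersetCard k univ ×ˢ powersetCard k univ := by
    ext AB
    simp only [mem_filter, mem_univ, true_and, mem_product, mem_powersetCard_univ]
    omega
  rw [hfiber, card_product, card_powersetCard, card_powersetCard, card_univ, card_univ]

variable {α β : Type*} [LinearOrder α] [LinearOrder β]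

theorem Finset.strictMonoOn_card_filter_lt (s : Finset α) :
    StrictMonoOn (fun a => #{x ∈ s | x < a}) s := by
  intro a ha b _ hab
  refine card_lt_card ((ssubset_iff_of_subset ?_).mpr ⟨a, ?_, ?_⟩)
  · exact monotone_filter_right s fun _ _ hx => hx.trans hab
  · simpa [hab] using ha
  · simp

def IsMonotoneMatching (h : Finset (α × β)) : Prop :=
  ∀ p ∈ h, ∀ q ∈ h, (p.1 < q.1 ↔ p.2 < q.2)

instance : DecidablePred (IsMonotoneMatching (α := α) (β := β)) := fun h =>
  inferInstanceAs (Decidable (∀ p ∈ h, ∀ q ∈ h, (p.1 < q.1 ↔ p.2 < q.2)))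

namespace IsMonotoneMatching

variable {h h' : Finset (α × β)}

theorem injOn_fst (hh : IsMonotoneMatching h) : Set.InjOn Prod.fst (h : Set (α × β)) := by
  intro p hp q hq hpq
  refine Prod.ext hpq (by_contra fun hne => ?_)
  rcases Ne.lt_or_gt hne with hlt | hlt
  · exact ((hh p hp q hq).mpr hlt).ne hpq
  · exact ((hh q hq p hp).mpr hlt).ne hpq.symm

theorem injOn_snd (hh : IsMonotoneMatching h) : Set.InjOn Prod.snd (h : Set (α × β)) := by
  intro p hp q hq hpq
  refine Prod.ext (by_contra fun hne => ?_) hpq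
  rcases Ne.lt_or_gt hne with hlt | hlt
  · exact ((hh p hp q hq).mp hlt).ne hpq
  · exact ((hh q hq p hp).mp hlt).ne hpq.symm

-- Both sides count the pairs of `h` lying before `p`.
theorem card_filter_image_fst_lt_eq (hh : IsMonotoneMatching h) {p : α × β} (hp : p ∈ h) :
    #{a ∈ h.image Prod.fst | a < p.1} = #{b ∈ h.image Prod.snd | b < p.2} := by
  rw [filter_image, filter_image, card_image_of_injOn (hh.injOn_fst.mono (filter_subset _ _)),
    card_image_of_injOn (hh.injOn_snd.mono (filter_subset _ _))]
  exact congrArg card (filter_congr fun q hq => hh q hq p hp)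

theorem subset_of_image_eq (hh : IsMonotoneMatching h) (hh' : IsMonotoneMatching h')
    (hfst : h.image Prod.fst = h'.image Prod.fst) (hsnd : h.image Prod.snd = h'.image Prod.snd) :
    h ⊆ h' := by
  intro p hp
  obtain ⟨q, hq, hqp⟩ := mem_image.mp (hfst ▸ mem_image_of_mem Prod.fst hp)
  have hrank : #{b ∈ h'.image Prod.snd | b < p.2} = #{b ∈ h'.image Prod.snd | b < q.2} :=
    calc #{b ∈ h'.image Prod.snd | b < p.2}
        = #{a ∈ h'.image Prod.fst | a < p.1} := by
          rw [← hsnd, ← hfst, hh.card_filter_image_fst_lt_eq hp]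
      _ = #{b ∈ h'.image Prod.snd | b < q.2} := by
          rw [← hqp, hh'.card_filter_image_fst_lt_eq hq]
  have hsnd_eq : p.2 = q.2 := (strictMonoOn_card_filter_lt _).injOn
    (hsnd ▸ mem_image_of_mem Prod.snd hp) (mem_image_of_mem Prod.snd hq) hrank
  exact Prod.ext hqp.symm hsnd_eq ▸ hq

theorem eq_of_image_eq (hh : IsMonotoneMatching h) (hh' : IsMonotoneMatching h')
    (hfst : h.image Prod.fst = h'.image Prod.fst) (hsnd : h.image Prod.snd = h'.image Prod.snd) :
    h = h' :=
  (hh.subset_of_image_eq hh' hfst hsnd).antisymm (hh'.subset_of_image_eq hh hfst.symm hsnd.symm)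

end IsMonotoneMatching

-- Match the `i`-th smallest element of `A` with the `i`-th smallest element of `B`.
theorem exists_isMonotoneMatching_image_eq {A : Finset α} {B : Finset β} (hAB : #A = #B) :
    ∃ h : Finset (α × β),
      IsMonotoneMatching h ∧ h.image Prod.fst = A ∧ h.image Prod.snd = B := by
  set e := A.orderEmbOfFin rfl
  set f := B.orderEmbOfFin hAB.symm
  refine ⟨univ.image fun i => (e i, f i), ?_, ?_, ?_⟩
  · simp only [IsMonotoneMatching, mem_image, mem_univ, true_and]
    rintro _ ⟨i, rfl⟩ _ ⟨j, rfl⟩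
    simp only [e.lt_iff_lt, f.lt_iff_lt]
  · rw [image_image]
    exact A.image_orderEmbOfFin_univ rfl
  · rw [image_image]
    exact B.image_orderEmbOfFin_univ hAB.symm

theorem card_filter_isMonotoneMatching [Fintype α] [Fintype β] :
    #(univ.filter fun h : Finset (α × β) => IsMonotoneMatching h)
      = (Fintype.card α + Fintype.card β).choose (Fintype.card β) := by
  rw [← card_filter_card_fst_eq_card_snd]
  refine card_bij (fun h _ => (h.image Prod.fst, h.image Prod.snd)) ?_ ?_ ?_
  · intro h hh
    rw [mem_filter] at hh ⊢
    refine ⟨mem_univ _, ?_⟩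
    rw [card_image_of_injOn hh.2.injOn_fst, card_image_of_injOn hh.2.injOn_snd]
  · intro h hh h' hh' heq
    exact (mem_filter.mp hh).2.eq_of_image_eq (mem_filter.mp hh').2 (congrArg Prod.fst heq)
      (congrArg Prod.snd heq)
  · intro AB hAB
    obtain ⟨h, hh, hfst, hsnd⟩ := exists_isMonotoneMatching_image_eq (mem_filter.mp hAB).2
    exact ⟨h, mem_filter.mpr ⟨mem_univ h, hh⟩, Prod.ext hfst hsnd⟩

/-- The number of distinct pairwise alignments of sequences of lengths
`n` and `m` (alignments identified with their set of matched position pairs, which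
forms a monotone partial matching) equals `C(n+m, m)`. -/
theorem card_distinct_alignments (n m : ℕ) :
    ((Finset.univ : Finset (Finset (Fin n × Fin m))).filter
      (fun h => ∀ p ∈ h, ∀ q ∈ h, (p.1 < q.1 ↔ p.2 < q.2))).card
      = (n + m).choose m := by
  have h := card_filter_isMonotoneMatching (α := Fin n) (β := Fin m)
  rw [Fintype.card_fin, Fintype.card_fin] at h
  convert h
  exact Iff.rfl
end

section
/- For alignments of sequences of lengths n and m, h_H^i = h_H^j if and only if (h_I^i = h_I^j and h_D^i = h_D^j). In other words, two alignments match the same pairs if and only if they gap exactly the same positions in both sequences. -/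
open Finset

/-- A pairwise alignment of sequences of lengths `n` and `m`, given by its set of
matched (homologous) position pairs, which forms a monotone partial matching. -/
structure SeqAlignment (n m : ℕ) where
  H : Finset (Fin n × Fin m)
  mono : ∀ p ∈ H, ∀ q ∈ H, (p.1 < q.1 ↔ p.2 < q.2)

namespace SeqAlignment

variable {n m : ℕ}

/-- Positions of the first sequence aligned to a gap. -/
def Dset (h : SeqAlignment n m) : Finset (Fin n) :=
  Finset.univ.filter (fun i => ∀ j, (i, j) ∉ h.H)

/-- Positions of the second sequence aligned to a gap. -/
def Iset (h : SeqAlignment n m) : Finset (Fin m) :=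
  Finset.univ.filter (fun j => ∀ i, (i, j) ∉ h.H)

/-- The alignment distance d. -/
def adist (hi hj : SeqAlignment n m) : ℤ :=
  (n : ℤ) + (m : ℤ) - 2 * ((hi.H ∩ hj.H).card : ℤ)
    - ((hi.Iset ∩ hj.Iset).card : ℤ) - ((hi.Dset ∩ hj.Dset).card : ℤ)

/-- The alignment similarity g. -/
noncomputable def gsim (hi hj : SeqAlignment n m) : ℝ :=
  1 - (adist hi hj : ℝ) / ((n : ℝ) + (m : ℝ))

end SeqAlignment

namespace SeqAlignmentAux

open SeqAlignment

variable {n m : ℕ}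

/-- each first coordinate is matched to at most one second coordinate -/
lemma unique_snd (h : SeqAlignment n m) {i : Fin n} {j j' : Fin m}
    (h1 : (i, j) ∈ h.H) (h2 : (i, j') ∈ h.H) : j = j' := by
  have m1 := h.mono _ h1 _ h2
  have m2 := h.mono _ h2 _ h1
  simp only at m1 m2
  have : ¬ j < j' := fun hl => absurd (m1.mpr hl) (lt_irrefl i)
  have : ¬ j' < j := fun hl => absurd (m2.mpr hl) (lt_irrefl i)
  omega

lemma unique_fst (h : SeqAlignment n m) {i i' : Fin n} {j : Fin m}
    (h1 : (i, j) ∈ h.H) (h2 : (i', j) ∈ h.H) : i = i' := by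
  have m1 := h.mono _ h1 _ h2
  have m2 := h.mono _ h2 _ h1
  simp only at m1 m2
  have : ¬ i < i' := fun hl => absurd (m1.mp hl) (lt_irrefl j)
  have : ¬ i' < i := fun hl => absurd (m2.mp hl) (lt_irrefl j)
  omega

/-- count of matched first-sequence positions below `i` -/
def cntD (h : SeqAlignment n m) (i : Fin n) : ℕ :=
  (Finset.univ.filter (fun a : Fin n => a ∉ h.Dset ∧ a < i)).card

/-- count of matched second-sequence positions below `j` -/
def cntI (h : SeqAlignment n m) (j : Fin m) : ℕ :=
  (Finset.univ.filter (fun b : Fin m => b ∉ h.Iset ∧ b < j)).card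

lemma not_mem_Dset_iff (h : SeqAlignment n m) (i : Fin n) :
    i ∉ h.Dset ↔ ∃ j, (i, j) ∈ h.H := by
  simp [Dset]

lemma not_mem_Iset_iff (h : SeqAlignment n m) (j : Fin m) :
    j ∉ h.Iset ↔ ∃ i, (i, j) ∈ h.H := by
  simp [Iset]

lemma cnt_eq (h : SeqAlignment n m) {i : Fin n} {j : Fin m}
    (hij : (i, j) ∈ h.H) : cntD h i = cntI h j := by
  have key1 : (h.H.filter (fun p => p.1 < i)).card = cntD h i := by
    apply Finset.card_bij (fun p _ => p.1)
    · intro p hp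
      simp only [Finset.mem_filter] at hp ⊢
      refine ⟨Finset.mem_univ _, ?_, hp.2⟩
      rw [not_mem_Dset_iff]
      exact ⟨p.2, hp.1⟩
    · intro p hp q hq hpq
      simp only [Finset.mem_filter] at hp hq
      have : p.2 = q.2 := by
        have h1 : (p.1, p.2) ∈ h.H := hp.1
        have h2 : (q.1, q.2) ∈ h.H := hq.1
        rw [hpq] at h1
        exact unique_snd h h1 h2
      exact Prod.ext hpq this
    · intro a ha
      simp only [Finset.mem_filter] at ha
      obtain ⟨b, hb⟩ := (not_mem_Dset_iff h a).mp ha.2.1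
      exact ⟨(a, b), Finset.mem_filter.mpr ⟨hb, ha.2.2⟩, rfl⟩
  have key2 : (h.H.filter (fun p => p.1 < i)).card = cntI h j := by
    apply Finset.card_bij (fun p _ => p.2)
    · intro p hp
      simp only [Finset.mem_filter] at hp ⊢
      refine ⟨Finset.mem_univ _, ?_, ?_⟩
      · rw [not_mem_Iset_iff]; exact ⟨p.1, hp.1⟩
      · exact (h.mono _ hp.1 _ hij).mp hp.2
    · intro p hp q hq hpq
      simp only [Finset.mem_filter] at hp hq
      have : p.1 = q.1 := by
        have h1 : (p.1, p.2) ∈ h.H := hp.1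
        have h2 : (q.1, q.2) ∈ h.H := hq.1
        rw [hpq] at h1
        exact unique_fst h h1 h2
      exact Prod.ext this hpq
    · intro b hb
      simp only [Finset.mem_filter] at hb
      obtain ⟨a, ha⟩ := (not_mem_Iset_iff h b).mp hb.2.1
      refine ⟨(a, b), Finset.mem_filter.mpr ⟨ha, ?_⟩, rfl⟩
      exact (h.mono _ ha _ hij).mpr hb.2.2
  rw [← key1, ← key2]

lemma cntI_strictMono (h : SeqAlignment n m) {j j' : Fin m}
    (hj : j ∉ h.Iset) (hlt : j < j') : cntI h j < cntI h j' := by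
  apply Finset.card_lt_card
  constructor
  · intro b hb
    simp only [Finset.mem_filter] at hb ⊢
    exact ⟨hb.1, hb.2.1, hb.2.2.trans hlt⟩
  · intro hsub
    have := hsub (Finset.mem_filter.mpr ⟨Finset.mem_univ j, hj, hlt⟩)
    simp only [Finset.mem_filter] at this
    exact absurd this.2.2 (lt_irrefl j)

lemma cntI_inj (h : SeqAlignment n m) {j j' : Fin m}
    (hj : j ∉ h.Iset) (hj' : j' ∉ h.Iset) (he : cntI h j = cntI h j') : j = j' := by
  rcases lt_trichotomy j j' with hl | he' | hl
  · exact absurd he (Nat.ne_of_lt (cntI_strictMono h hj hl))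
  · exact he'
  · exact absurd he.symm (Nat.ne_of_lt (cntI_strictMono h hj' hl))

lemma mem_H_iff (h : SeqAlignment n m) (i : Fin n) (j : Fin m) :
    (i, j) ∈ h.H ↔ i ∉ h.Dset ∧ j ∉ h.Iset ∧ cntD h i = cntI h j := by
  constructor
  · intro hij
    exact ⟨(not_mem_Dset_iff h i).mpr ⟨j, hij⟩,
      (not_mem_Iset_iff h j).mpr ⟨i, hij⟩, cnt_eq h hij⟩
  · rintro ⟨hd, hi, hc⟩
    obtain ⟨j₀, hj₀⟩ := (not_mem_Dset_iff h i).mp hd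
    have hj₀I : j₀ ∉ h.Iset := (not_mem_Iset_iff h j₀).mpr ⟨i, hj₀⟩
    have : cntI h j = cntI h j₀ := by rw [← hc, cnt_eq h hj₀]
    rw [cntI_inj h hi hj₀I this]
    exact hj₀

end SeqAlignmentAux

/-- two alignments match the same pairs iff they gap exactly the same
positions in both sequences. -/
theorem alignment_H_eq_iff_gaps_eq (n m : ℕ) (hi hj : SeqAlignment n m) :
    hi.H = hj.H ↔ (hi.Iset = hj.Iset ∧ hi.Dset = hj.Dset) := by
  constructor
  · intro h
    constructor
    · ext j; simp [SeqAlignment.Iset, h]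
    · ext i; simp [SeqAlignment.Dset, h]
  · rintro ⟨hI, hD⟩
    ext ⟨i, j⟩
    rw [SeqAlignmentAux.mem_H_iff, SeqAlignmentAux.mem_H_iff, hI, hD]
    have hcD : SeqAlignmentAux.cntD hi i = SeqAlignmentAux.cntD hj i := by
      simp [SeqAlignmentAux.cntD, hD]
    have hcI : SeqAlignmentAux.cntI hi j = SeqAlignmentAux.cntI hj j := by
      simp [SeqAlignmentAux.cntI, hI]
    rw [hcD, hcI]
end

section
/- The function d(h^i, h^j) = n + m − 2|h_H^i ∩ h_H^j| − |h_I^i ∩ h_I^j| − |h_D^i ∩ h_D^j| satisfies the triangle inequality: d(h^i, h^k) ≤ d(h^i, h^j) + d(h^j, h^k) for all alignments h^i, h^j, h^k of sequences of lengths n and m. -/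
open Finset

namespace SeqAlignment

variable {n m : ℕ}

lemma fst_injOn (h : SeqAlignment n m) :
    Set.InjOn Prod.fst (h.H : Set (Fin n × Fin m)) := by
  intro p hp q hq hpq
  have h1 := h.mono p hp q hq
  have h2 := h.mono q hq p hp
  have : p.2 = q.2 := by
    rcases lt_trichotomy p.2 q.2 with hlt | heq | hgt
    · exact absurd (h1.mpr hlt) (by omega)
    · exact heq
    · exact absurd (h2.mpr hgt) (by omega)
  exact Prod.ext hpq this

lemma snd_injOn (h : SeqAlignment n m) :
    Set.InjOn Prod.snd (h.H : Set (Fin n × Fin m)) := by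
  intro p hp q hq hpq
  have h1 := h.mono p hp q hq
  have h2 := h.mono q hq p hp
  have : p.1 = q.1 := by
    rcases lt_trichotomy p.1 q.1 with hlt | heq | hgt
    · exact absurd (h1.mp hlt) (by omega)
    · exact heq
    · exact absurd (h2.mp hgt) (by omega)
  exact Prod.ext this hpq

lemma card_H_add_D (h : SeqAlignment n m) : h.H.card + h.Dset.card = n := by
  have key : (Finset.univ.filter (fun i => ¬ ∀ j, (i, j) ∉ h.H)).card
      + h.Dset.card = n := by
    rw [Dset]
    have := Finset.card_filter_add_card_filter_not
      (s := (Finset.univ : Finset (Fin n))) (p := fun i => ∀ j, (i, j) ∉ h.H)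
    simpa [Finset.card_univ, add_comm] using this
  have himg : Finset.univ.filter (fun i => ¬ ∀ j, (i, j) ∉ h.H) = h.H.image Prod.fst := by
    ext i
    simp only [mem_filter, mem_univ, true_and, mem_image, not_forall, not_not]
    constructor
    · rintro ⟨j, hj⟩; exact ⟨(i, j), by simpa using hj, rfl⟩
    · rintro ⟨⟨a, b⟩, hab, rfl⟩; exact ⟨b, by simpa using hab⟩
  rw [himg, Finset.card_image_of_injOn (fst_injOn h)] at key
  exact key

lemma card_H_add_I (h : SeqAlignment n m) : h.H.card + h.Iset.card = m := by
  have key : (Finset.univ.filter (fun j => ¬ ∀ i, (i, j) ∉ h.H)).card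
      + h.Iset.card = m := by
    rw [Iset]
    have := Finset.card_filter_add_card_filter_not
      (s := (Finset.univ : Finset (Fin m))) (p := fun j => ∀ i, (i, j) ∉ h.H)
    simpa [Finset.card_univ, add_comm] using this
  have himg : Finset.univ.filter (fun j => ¬ ∀ i, (i, j) ∉ h.H) = h.H.image Prod.snd := by
    ext j
    simp only [mem_filter, mem_univ, true_and, mem_image, not_forall, not_not]
    constructor
    · rintro ⟨i, hij⟩; exact ⟨(i, j), by simpa using hij, rfl⟩
    · rintro ⟨⟨a, b⟩, hab, rfl⟩; exact ⟨a, by simpa using hab⟩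
  rw [himg, Finset.card_image_of_injOn (snd_injOn h)] at key
  exact key

end SeqAlignment

/-- Key cardinality inequality: `|A ∩ B| + |B ∩ C| ≤ |B| + |A ∩ C|`. -/
lemma key_card {α : Type*} [DecidableEq α] (A B C : Finset α) :
    (A ∩ B).card + (B ∩ C).card ≤ B.card + (A ∩ C).card := by
  have h1 : ((A ∩ B) ∪ (B ∩ C)).card + ((A ∩ B) ∩ (B ∩ C)).card
      = (A ∩ B).card + (B ∩ C).card := Finset.card_union_add_card_inter _ _
  have h2 : ((A ∩ B) ∪ (B ∩ C)).card ≤ B.card := by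
    apply Finset.card_le_card
    intro x hx
    rcases Finset.mem_union.mp hx with h | h
    · exact (Finset.mem_inter.mp h).2
    · exact (Finset.mem_inter.mp h).1
  have h3 : ((A ∩ B) ∩ (B ∩ C)).card ≤ (A ∩ C).card := by
    apply Finset.card_le_card
    intro x hx
    simp only [Finset.mem_inter] at hx ⊢
    exact ⟨hx.1.1, hx.2.2⟩
  omega

/-- the alignment distance satisfies the triangle inequality. -/
theorem adist_triangle (n m : ℕ) (hi hj hk : SeqAlignment n m) :
    SeqAlignment.adist hi hk ≤ SeqAlignment.adist hi hj + SeqAlignment.adist hj hk := by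
  have hH := key_card hi.H hj.H hk.H
  have hI := key_card hi.Iset hj.Iset hk.Iset
  have hD := key_card hi.Dset hj.Dset hk.Dset
  simp only [SeqAlignment.adist]
  have hH' : ((hi.H ∩ hj.H).card : ℤ) + (hj.H ∩ hk.H).card
      ≤ hj.H.card + (hi.H ∩ hk.H).card := by exact_mod_cast hH
  have hI' : ((hi.Iset ∩ hj.Iset).card : ℤ) + (hj.Iset ∩ hk.Iset).card
      ≤ hj.Iset.card + (hi.Iset ∩ hk.Iset).card := by exact_mod_cast hI
  have hD' : ((hi.Dset ∩ hj.Dset).card : ℤ) + (hj.Dset ∩ hk.Dset).card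
      ≤ hj.Dset.card + (hi.Dset ∩ hk.Dset).card := by exact_mod_cast hD
  have e1' : (hj.H.card : ℤ) + hj.Dset.card = n := by exact_mod_cast hj.card_H_add_D
  have e2' : (hj.H.card : ℤ) + hj.Iset.card = m := by exact_mod_cast hj.card_H_add_I
  linarith
end

section
/- The alignment distance d(h^i, h^j) = n + m − 2|h_H^i ∩ h_H^j| − |h_I^i ∩ h_I^j| − |h_D^i ∩ h_D^j| induces a metric on the set of equivalence classes of alignments of sequences of lengths n and m (nonnegative, zero exactly on equivalent alignments, symmetric, and satisfying the triangle inequality). -/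
open Finset

namespace SeqAlignment

open Classical in
variable {n m : ℕ}

lemma eq_of_fst_eq (h : SeqAlignment n m) {p q : Fin n × Fin m}
    (hp : p ∈ h.H) (hq : q ∈ h.H) (e : p.1 = q.1) : p = q := by
  have h1 := h.mono p hp q hq
  have h2 := h.mono q hq p hp
  have e2 : p.2 = q.2 := by
    apply le_antisymm
    · exact le_of_not_gt fun hlt => lt_irrefl p.1 (e ▸ h2.mpr hlt)
    · exact le_of_not_gt fun hlt => lt_irrefl p.1 (by
        have := h1.mpr hlt; omega)
  exact Prod.ext e e2

open Classical in
/-- The partner of position `i` in the first sequence, if any. -/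
noncomputable def partner (h : SeqAlignment n m) (i : Fin n) : Option (Fin m) :=
  if hh : ∃ j, (i, j) ∈ h.H then some hh.choose else none

lemma mem_iff_partner (h : SeqAlignment n m) {i : Fin n} {j : Fin m} :
    (i, j) ∈ h.H ↔ h.partner i = some j := by
  unfold partner
  constructor
  · intro hm
    have hh : ∃ j, (i, j) ∈ h.H := ⟨j, hm⟩
    rw [dif_pos hh]
    have := h.eq_of_fst_eq hh.choose_spec hm (rfl : ((i, hh.choose) : Fin n × Fin m).1 = (i, j).1)
    simpa using congrArg Prod.snd this
  · intro hm
    by_cases hh : ∃ j, (i, j) ∈ h.H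
    · rw [dif_pos hh] at hm
      obtain rfl : hh.choose = j := by simpa using hm
      exact hh.choose_spec
    · rw [dif_neg hh] at hm; exact absurd hm (by simp)

lemma partner_eq_none_iff (h : SeqAlignment n m) {i : Fin n} :
    h.partner i = none ↔ i ∈ h.Dset := by
  simp only [Dset, mem_filter, mem_univ, true_and]
  unfold partner
  by_cases hh : ∃ j, (i, j) ∈ h.H
  · simp only [dif_pos hh]
    exact ⟨fun hc => by simp at hc, fun hc => absurd hh (by push_neg; exact hc)⟩
  · simp only [dif_neg hh]
    push_neg at hh
    simp [hh]

open Classical in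
/-- Positions of the first sequence on which two alignments agree. -/
noncomputable def Agree (hi hj : SeqAlignment n m) : Finset (Fin n) :=
  Finset.univ.filter (fun i => hi.partner i = hj.partner i)

open Classical in
lemma card_split (hi hj : SeqAlignment n m) :
    ((hi.H ∩ hj.H).card + (hi.Dset ∩ hj.Dset).card : ℕ) = (Agree hi hj).card := by
  classical
  have hinj : Set.InjOn Prod.fst ((hi.H ∩ hj.H : Finset (Fin n × Fin m)) : Set (Fin n × Fin m)) := by
    intro p hp q hq e
    simp only [Finset.coe_inter, Set.mem_inter_iff, Finset.mem_coe] at hp hq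
    exact hi.eq_of_fst_eq hp.1 hq.1 e
  have h1 : (hi.H ∩ hj.H).card = ((hi.H ∩ hj.H).image Prod.fst).card :=
    (Finset.card_image_of_injOn hinj).symm
  have himg : (hi.H ∩ hj.H).image Prod.fst
      = (Agree hi hj).filter (fun i => (hi.partner i).isSome) := by
    ext i
    simp only [Finset.mem_image, Finset.mem_inter, Agree, Finset.mem_filter, Finset.mem_univ,
      true_and]
    constructor
    · rintro ⟨p, ⟨hp1, hp2⟩, rfl⟩
      have e1 : hi.partner p.1 = some p.2 := (mem_iff_partner hi).mp hp1
      have e2 : hj.partner p.1 = some p.2 := (mem_iff_partner hj).mp hp2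
      rw [e1, e2]; simp
    · rintro ⟨heq, hsome⟩
      obtain ⟨j, hjv⟩ := Option.isSome_iff_exists.mp hsome
      exact ⟨(i, j), ⟨(mem_iff_partner hi).mpr hjv,
        (mem_iff_partner hj).mpr (heq ▸ hjv)⟩, rfl⟩
  have hD : hi.Dset ∩ hj.Dset
      = (Agree hi hj).filter (fun i => ¬ (hi.partner i).isSome) := by
    ext i
    simp only [Finset.mem_inter, Agree, Finset.mem_filter, Finset.mem_univ, true_and,
      Option.not_isSome_iff_eq_none]
    constructor
    · rintro ⟨h1, h2⟩
      have e1 := (partner_eq_none_iff hi).mpr h1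
      have e2 := (partner_eq_none_iff hj).mpr h2
      exact ⟨e1.trans e2.symm, e1⟩
    · rintro ⟨heq, hnone⟩
      exact ⟨(partner_eq_none_iff hi).mp hnone,
        (partner_eq_none_iff hj).mp (heq ▸ hnone)⟩
  rw [h1, himg, hD]
  exact Finset.card_filter_add_card_filter_not _

/-- Swap the two sequences. -/
def flip (h : SeqAlignment n m) : SeqAlignment m n where
  H := h.H.image Prod.swap
  mono := by
    intro p hp q hq
    simp only [Finset.mem_image] at hp hq
    obtain ⟨p', hp', rfl⟩ := hp
    obtain ⟨q', hq', rfl⟩ := hq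
    exact (h.mono p' hp' q' hq').symm

lemma flip_Dset (h : SeqAlignment n m) : (flip h).Dset = h.Iset := by
  ext j
  have key : (∀ i, (j, i) ∉ (flip h).H) ↔ (∀ i, (i, j) ∉ h.H) := by
    constructor
    · intro hh i hm
      exact hh i (Finset.mem_image_of_mem Prod.swap hm)
    · intro hh i hm
      obtain ⟨p, hp, he⟩ := Finset.mem_image.mp hm
      have hpe : p = (i, j) := by
        have := congrArg Prod.swap he
        simpa using this
      exact hh i (hpe ▸ hp)
  simp only [Dset, Iset, Finset.mem_filter, Finset.mem_univ, true_and]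
  exact key

lemma flip_inter_card (hi hj : SeqAlignment n m) :
    ((flip hi).H ∩ (flip hj).H).card = (hi.H ∩ hj.H).card := by
  have : (flip hi).H ∩ (flip hj).H = (hi.H ∩ hj.H).image Prod.swap := by
    simp only [flip]
    rw [Finset.image_inter _ _ Prod.swap_injective]
  rw [this, Finset.card_image_of_injective _ Prod.swap_injective]

lemma adist_eq (hi hj : SeqAlignment n m) :
    adist hi hj = ((n : ℤ) - (Agree hi hj).card) + ((m : ℤ) - (Agree (flip hi) (flip hj)).card) := by
  have h1 := card_split hi hj
  have h2 := card_split (flip hi) (flip hj)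
  rw [flip_inter_card, flip_Dset, flip_Dset] at h2
  unfold adist
  push_cast [← h1, ← h2]
  ring

lemma agree_card_le (hi hj : SeqAlignment n m) : (Agree hi hj).card ≤ n := by
  simpa using Finset.card_le_card (Finset.subset_univ (Agree hi hj))

lemma agree_triangle (hi hj hk : SeqAlignment n m) :
    (Agree hi hj).card + (Agree hj hk).card ≤ n + (Agree hi hk).card := by
  classical
  have hsub : Agree hi hj ∩ Agree hj hk ⊆ Agree hi hk := by
    intro i hi'
    simp only [Agree, Finset.mem_inter, Finset.mem_filter, Finset.mem_univ, true_and] at hi' ⊢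
    exact hi'.1.trans hi'.2
  calc (Agree hi hj).card + (Agree hj hk).card
      = (Agree hi hj ∪ Agree hj hk).card + (Agree hi hj ∩ Agree hj hk).card :=
        (Finset.card_union_add_card_inter _ _).symm
    _ ≤ n + (Agree hi hk).card := by
        refine Nat.add_le_add ?_ (Finset.card_le_card hsub)
        have := Finset.card_le_card (Finset.subset_univ (Agree hi hj ∪ Agree hj hk))
        simpa using this

lemma agree_comm (hi hj : SeqAlignment n m) : Agree hi hj = Agree hj hi := by
  classical
  ext i; simp only [Agree, Finset.mem_filter, Finset.mem_univ, true_and]; exact eq_comm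

lemma agree_card_eq_iff (hi hj : SeqAlignment n m) :
    (Agree hi hj).card = n ↔ hi.H = hj.H := by
  classical
  constructor
  · intro hc
    have huniv : Agree hi hj = Finset.univ :=
      Finset.eq_univ_of_card _ (by rw [hc, Fintype.card_fin])
    have hp : ∀ i, hi.partner i = hj.partner i := by
      intro i
      have : i ∈ Agree hi hj := huniv ▸ Finset.mem_univ i
      simpa [Agree] using this
    ext p
    obtain ⟨i, j⟩ := p
    rw [mem_iff_partner, mem_iff_partner, hp i]
  · intro hH
    have : Agree hi hj = Finset.univ := by
      apply Finset.eq_univ_of_forall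
      intro i
      simp only [Agree, Finset.mem_filter, Finset.mem_univ, true_and]
      unfold partner
      simp [hH]
    simp [this]

end SeqAlignment

/-- d is a metric on equivalence classes of alignments: nonnegative,
zero exactly on equivalent alignments, symmetric, and satisfying the triangle
inequality. -/
theorem adist_is_metric (n m : ℕ) :
    (∀ hi hj : SeqAlignment n m, 0 ≤ SeqAlignment.adist hi hj) ∧
    (∀ hi hj : SeqAlignment n m, SeqAlignment.adist hi hj = 0 ↔ hi.H = hj.H) ∧
    (∀ hi hj : SeqAlignment n m, SeqAlignment.adist hi hj = SeqAlignment.adist hj hi) ∧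
    (∀ hi hj hk : SeqAlignment n m,
      SeqAlignment.adist hi hk ≤ SeqAlignment.adist hi hj + SeqAlignment.adist hj hk) := by
  refine ⟨?_, ?_, ?_, ?_⟩
  · intro hi hj
    rw [SeqAlignment.adist_eq]
    have h1 := SeqAlignment.agree_card_le hi hj
    have h2 := SeqAlignment.agree_card_le (SeqAlignment.flip hi) (SeqAlignment.flip hj)
    omega
  · intro hi hj
    rw [SeqAlignment.adist_eq]
    have h1 := SeqAlignment.agree_card_le hi hj
    have h2 := SeqAlignment.agree_card_le (SeqAlignment.flip hi) (SeqAlignment.flip hj)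
    constructor
    · intro h0
      have hc : (SeqAlignment.Agree hi hj).card = n := by push_cast at h0; omega
      exact (SeqAlignment.agree_card_eq_iff hi hj).mp hc
    · intro hH
      have hc1 : (SeqAlignment.Agree hi hj).card = n := (SeqAlignment.agree_card_eq_iff hi hj).mpr hH
      have hc2 : (SeqAlignment.Agree (SeqAlignment.flip hi) (SeqAlignment.flip hj)).card = m :=
        (SeqAlignment.agree_card_eq_iff _ _).mpr (by simp [SeqAlignment.flip, hH])
      rw [hc1, hc2]; ring
  · intro hi hj
    rw [SeqAlignment.adist_eq, SeqAlignment.adist_eq, SeqAlignment.agree_comm, SeqAlignment.agree_comm (SeqAlignment.flip hi)]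
  · intro hi hj hk
    rw [SeqAlignment.adist_eq, SeqAlignment.adist_eq, SeqAlignment.adist_eq]
    have t1 := SeqAlignment.agree_triangle hi hj hk
    have t2 := SeqAlignment.agree_triangle (SeqAlignment.flip hi) (SeqAlignment.flip hj) (SeqAlignment.flip hk)
    omega
end

section
/- Maximizing the AMAP objective with gap-factor 1/2 maximizes the expected alignment metric accuracy: for a probability distribution over reference alignments, the expectation of (n + m)·g(h, h^r) with respect to h^r equals 2·(Σ_{(i,j)∈h_H} p_{ij} + (1/2)Σ_{i∈h_D} q_i + (1/2)Σ_{j∈h_I} r_j), where p_{ij} = P((i,j) ∈ h^r_H), q_i = P(i ∈ h^r_D), r_j = P(j ∈ h^r_I). Hence the argmax over h of the expected AMA equals the argmax of the AMAP objective with G_f = 1/2. -/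
open Finset

lemma sum_w_card_inter {γ α : Type*} [DecidableEq α] (S : Finset γ) (w : γ → ℝ)
    (A : Finset α) (g : γ → Finset α) :
    ∑ hr ∈ S, w hr * ((A ∩ g hr).card : ℝ)
      = ∑ x ∈ A, ∑ hr ∈ S.filter (fun hr => x ∈ g hr), w hr := by
  have hcard : ∀ hr, ((A ∩ g hr).card : ℝ) = ∑ x ∈ A, if x ∈ g hr then (1:ℝ) else 0 := by
    intro hr
    rw [Finset.sum_boole, ← Finset.filter_mem_eq_inter]
  simp_rw [hcard, Finset.mul_sum, Finset.sum_filter]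
  rw [Finset.sum_comm]
  congr 1; ext x; congr 1; ext hr
  by_cases hx : x ∈ g hr <;> simp [hx]

/-- maximizing the AMAP objective with gap-factor 1/2 maximizes the
expected alignment metric accuracy. The distribution over reference alignments is
given by weights `w` on a finite set `S`, and `p`, `q`, `r` are the induced posterior
match/gap probabilities. -/
theorem amap_half_maximizes_expected_AMA (n m : ℕ) (hpos : 0 < n + m)
    (S : Finset (SeqAlignment n m)) (w : SeqAlignment n m → ℝ)
    (hw : ∀ hr ∈ S, 0 ≤ w hr) (hw1 : ∑ hr ∈ S, w hr = 1)
    (p : Fin n × Fin m → ℝ) (q : Fin n → ℝ) (r : Fin m → ℝ)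
    (hpdef : ∀ x : Fin n × Fin m, p x = ∑ hr ∈ S.filter (fun hr => x ∈ hr.H), w hr)
    (hqdef : ∀ i : Fin n, q i = ∑ hr ∈ S.filter (fun hr => i ∈ hr.Dset), w hr)
    (hrdef : ∀ j : Fin m, r j = ∑ hr ∈ S.filter (fun hr => j ∈ hr.Iset), w hr) :
    (∀ h : SeqAlignment n m,
        ∑ hr ∈ S, w hr * (((n : ℝ) + (m : ℝ)) * SeqAlignment.gsim h hr)
          = 2 * ((∑ x ∈ h.H, p x) + (1 / 2) * (∑ i ∈ h.Dset, q i)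
            + (1 / 2) * (∑ j ∈ h.Iset, r j))) ∧
      {h : SeqAlignment n m | ∀ h' : SeqAlignment n m,
          (∑ hr ∈ S, w hr * SeqAlignment.gsim h' hr)
            ≤ ∑ hr ∈ S, w hr * SeqAlignment.gsim h hr}
        = {h : SeqAlignment n m | ∀ h' : SeqAlignment n m,
          ((∑ x ∈ h'.H, p x) + (1 / 2) * (∑ i ∈ h'.Dset, q i)
              + (1 / 2) * (∑ j ∈ h'.Iset, r j))
            ≤ ((∑ x ∈ h.H, p x) + (1 / 2) * (∑ i ∈ h.Dset, q i)
              + (1 / 2) * (∑ j ∈ h.Iset, r j))} := by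
  have hne : ((n : ℝ) + (m : ℝ)) ≠ 0 := by
    have : (0 : ℝ) < (n : ℝ) + (m : ℝ) := by exact_mod_cast hpos
    exact this.ne'
  have hkey : ∀ h : SeqAlignment n m,
      ∑ hr ∈ S, w hr * (((n : ℝ) + (m : ℝ)) * SeqAlignment.gsim h hr)
        = 2 * ((∑ x ∈ h.H, p x) + (1 / 2) * (∑ i ∈ h.Dset, q i)
          + (1 / 2) * (∑ j ∈ h.Iset, r j)) := by
    intro h
    have hpt : ∀ hr : SeqAlignment n m,
        ((n : ℝ) + (m : ℝ)) * SeqAlignment.gsim h hr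
          = 2 * ((h.H ∩ hr.H).card : ℝ) + ((h.Iset ∩ hr.Iset).card : ℝ)
            + ((h.Dset ∩ hr.Dset).card : ℝ) := by
      intro hr
      unfold SeqAlignment.gsim SeqAlignment.adist
      field_simp
      push_cast
      ring
    simp_rw [hpt, mul_add, Finset.sum_add_distrib, ← mul_assoc, mul_comm (w _) 2,
      mul_assoc]
    rw [← Finset.mul_sum, sum_w_card_inter S w h.H (fun hr => hr.H),
      sum_w_card_inter S w h.Iset (fun hr => hr.Iset),
      sum_w_card_inter S w h.Dset (fun hr => hr.Dset)]
    simp_rw [← hpdef, ← hqdef, ← hrdef]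
    ring
  refine ⟨hkey, ?_⟩
  have hg : ∀ h : SeqAlignment n m,
      ∑ hr ∈ S, w hr * SeqAlignment.gsim h hr
        = (2 * ((∑ x ∈ h.H, p x) + (1 / 2) * (∑ i ∈ h.Dset, q i)
          + (1 / 2) * (∑ j ∈ h.Iset, r j))) / ((n : ℝ) + (m : ℝ)) := by
    intro h
    rw [← hkey h, Finset.sum_div]
    congr 1; ext hr
    field_simp
  ext h
  simp only [Set.mem_setOf_eq, hg]
  have hpos' : (0 : ℝ) < (n : ℝ) + (m : ℝ) := by exact_mod_cast hpos
  constructor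
  · intro hh h'
    have := hh h'
    rw [div_le_div_iff_of_pos_right hpos'] at this
    linarith
  · intro hh h'
    rw [div_le_div_iff_of_pos_right hpos']
    have := hh h'
    linarith
end
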